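/- In ℝ[x_1, x_2, x_3] let f = (x_3 − x_1² x_2)², h_1 = 1 − x_1², h_2 = x_2, h_3 = x_3 − x_2 − 1 (s = 0, t = 3). Then: (i) the global minimum of f over {x ∈ ℝ³ : h_1(x) ≥ 0, h_2(x) ≥ 0, h_3(x) ≥ 0} equals 1; but (ii) sup{γ ∈ ℝ : f − γ ∈ M_KKT} = 0. In particular, the lower bounds f*_N = sup{γ : f − γ ∈ M_{N,KKT}} of the linear-cone SOS relaxations satisfy lim_{N→∞} f*_N = 0 < 1 = f*, so these relaxations fail to converge to the global minimum. -/
import Mathlib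

open MvPolynomial Filter

noncomputable section

/-- Variables `x_1, x_2, x_3, ν_1, ν_2, ν_3`. -/
abbrev EVar := Sum (Fin 3) (Fin 3)

/-- The polynomial ring `ℝ[x, ν]`. -/
abbrev EPoly := MvPolynomial EVar ℝ

/-- A real polynomial is SOS if it is a finite sum of squares of real polynomials. -/
def IsSOS {σ : Type*} (p : MvPolynomial σ ℝ) : Prop :=
  ∃ (m : ℕ) (q : Fin m → MvPolynomial σ ℝ), p = ∑ i, (q i) ^ 2

/-- The constraints `h_1 = 1 − x_1², h_2 = x_2, h_3 = x_3 − x_2 − 1`. -/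
def eh : Fin 3 → MvPolynomial (Fin 3) ℝ :=
  ![1 - X 0 ^ 2, X 1, X 2 - X 1 - 1]

/-- The objective `f = (x_3 − x_1² x_2)²`. -/
def ef : MvPolynomial (Fin 3) ℝ := (X 2 - X 0 ^ 2 * X 1) ^ 2

/-- Lift a polynomial in `ℝ[x]` to `ℝ[x, ν]`. -/
def eliftX (p : MvPolynomial (Fin 3) ℝ) : EPoly := rename Sum.inl p

/-- The variable `ν_j`. -/
def enu (j : Fin 3) : EPoly := X (Sum.inr j)

/-- `F_k = ∂f/∂x_k − Σ_j ν_j ∂h_j/∂x_k`. -/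
def eF (k : Fin 3) : EPoly :=
  eliftX (pderiv k ef) - ∑ j, enu j * eliftX (pderiv k (eh j))

/-- The KKT ideal `I_KKT = ⟨F_1, F_2, F_3, ν_1 h_1, ν_2 h_2, ν_3 h_3⟩ ⊆ ℝ[x, ν]`. -/
def eI : Ideal EPoly :=
  Ideal.span (Set.range eF ∪ Set.range (fun j => enu j * eliftX (eh j)))

/-- The linear cone `M_KKT = {σ_0 + Σ_j σ_j h_j : σ_i SOS} + I_KKT`. -/
def eM : Set EPoly :=
  {p | ∃ (σ0 : EPoly) (σ : Fin 3 → EPoly),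
    IsSOS σ0 ∧ (∀ j, IsSOS (σ j)) ∧
    ∃ q ∈ eI, p = σ0 + (∑ j, σ j * eliftX (eh j)) + q}

/-- The truncated KKT ideal `I_{N,KKT}`. -/
def eITrunc (N : ℕ) : Set EPoly :=
  {p | ∃ φ χ : Fin 3 → EPoly,
    (∀ k, (φ k * eF k).totalDegree ≤ N) ∧
    (∀ j, (χ j * (enu j * eliftX (eh j))).totalDegree ≤ N) ∧
    p = (∑ k, φ k * eF k) + (∑ j, χ j * (enu j * eliftX (eh j)))}

/-- The truncated linear cone `M_{N,KKT}`. -/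
def eMTrunc (N : ℕ) : Set EPoly :=
  {p | ∃ (σ0 : EPoly) (σ : Fin 3 → EPoly),
    IsSOS σ0 ∧ (∀ j, IsSOS (σ j)) ∧
    σ0.totalDegree ≤ N ∧ (∀ j, (σ j * eliftX (eh j)).totalDegree ≤ N) ∧
    ∃ q ∈ eITrunc N, p = σ0 + (∑ j, σ j * eliftX (eh j)) + q}

/-! ### Auxiliary lemmas: univariate real polynomials with nonnegative values -/

/-- A polynomial taking only nonnegative values has nonnegative leading coefficient. -/
theorem nonnegPoly_leadingCoeff {p : Polynomial ℝ} (h : ∀ x : ℝ, 0 ≤ p.eval x) :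
    0 ≤ p.leadingCoeff := by
  by_contra hlt
  push_neg at hlt
  rcases eq_or_ne p 0 with rfl | hp
  · simp [Polynomial.leadingCoeff_zero] at hlt
  rcases Nat.eq_zero_or_pos p.natDegree with h0 | hpos
  · rcases Polynomial.natDegree_eq_zero.mp h0 with ⟨c, rfl⟩
    have := h 0
    simp only [Polynomial.eval_C] at this
    have hc : (Polynomial.C c).leadingCoeff = c := by simp [Polynomial.leadingCoeff_C]
    rw [hc] at hlt
    linarith
  · have hdeg : 0 < p.degree := Polynomial.natDegree_pos_iff_degree_pos.mp hpos
    have ht := Polynomial.tendsto_atBot_of_leadingCoeff_nonpos p hdeg hlt.le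
    have : ∀ᶠ x : ℝ in atTop, p.eval x < 0 := ht.eventually (eventually_lt_atBot 0)
    rcases this.exists with ⟨x, hx⟩
    exact absurd (h x) (not_le.mpr hx)

/-- A nonzero polynomial taking only nonnegative values has even degree. -/
theorem nonnegPoly_even_natDegree {p : Polynomial ℝ} (h : ∀ x : ℝ, 0 ≤ p.eval x)
    (hp : p ≠ 0) : Even p.natDegree := by
  by_contra hodd
  rw [Nat.not_even_iff_odd] at hodd
  set q : Polynomial ℝ := p.comp (-Polynomial.X) with hq
  have hq_eval : ∀ x : ℝ, q.eval x = p.eval (-x) := by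
    intro x; simp [hq, Polynomial.eval_comp]
  have hqnn : ∀ x : ℝ, 0 ≤ q.eval x := fun x => (hq_eval x) ▸ h (-x)
  have hnd : (-Polynomial.X : Polynomial ℝ).natDegree ≠ 0 := by simp
  have hlc : q.leadingCoeff = p.leadingCoeff * (-1) ^ p.natDegree := by
    rw [hq, Polynomial.leadingCoeff_comp hnd]
    simp
  rw [hodd.neg_one_pow] at hlc
  have h1 := nonnegPoly_leadingCoeff h
  have h2 := nonnegPoly_leadingCoeff hqnn
  rw [hlc] at h2
  have : p.leadingCoeff = 0 := le_antisymm (by linarith) h1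
  exact hp (Polynomial.leadingCoeff_eq_zero.mp this)

/-- A polynomial vanishing on an interval is zero. -/
theorem poly_zero_of_zero_on_Ioo {p : Polynomial ℝ} {a b : ℝ} (hab : a < b)
    (h : ∀ x ∈ Set.Ioo a b, p.eval x = 0) : p = 0 := by
  apply Polynomial.eq_zero_of_infinite_isRoot
  apply Set.Infinite.mono (s := Set.Ioo a b)
  · intro x hx; exact h x hx
  · exact Set.Ioo_infinite hab

/-! ### Bivariate polynomials `ℝ[a][b]` with nonnegative values -/

/-- The bivariate polynomial ring `ℝ[a][b]`. -/
abbrev R2 := Polynomial (Polynomial ℝ)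

/-- Evaluation of a bivariate polynomial at `(a, b) = (t, u)`. -/
def ev2 (t u : ℝ) : R2 →+* ℝ :=
  (Polynomial.evalRingHom t).comp (Polynomial.evalRingHom (Polynomial.C u))

/-- Nonnegative-valued bivariate polynomial. -/
def NN2 (S : R2) : Prop := ∀ t u : ℝ, 0 ≤ ev2 t u S

lemma ev2_eq (t u : ℝ) :
    ev2 t u = (Polynomial.evalRingHom u).comp
      (Polynomial.mapRingHom (Polynomial.evalRingHom t)) := by
  apply Polynomial.ringHom_ext <;> simp [ev2]

lemma ev2_map (t u : ℝ) (S : R2) :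
    ev2 t u S = (S.map (Polynomial.evalRingHom t)).eval u := by
  rw [ev2_eq]; rfl

/-- Coefficients at (or above) the degree of a nonnegative-valued bivariate polynomial
are nonnegative-valued. -/
lemma NN2.coeff_nonneg {S : R2} (h : NN2 S) {k : ℕ} (hk : S.degree ≤ k) (t : ℝ) :
    0 ≤ (S.coeff k).eval t := by
  have hnk : S.natDegree ≤ k := Polynomial.natDegree_le_iff_degree_le.mpr hk
  set q := S.map (Polynomial.evalRingHom t) with hq
  have hqe : ∀ u : ℝ, 0 ≤ q.eval u := by
    intro u; rw [hq, ← ev2_map]; exact h t u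
  have hco : q.coeff k = (S.coeff k).eval t := by
    rw [hq, Polynomial.coeff_map]; rfl
  have hqk : q.natDegree ≤ k := le_trans Polynomial.natDegree_map_le hnk
  rcases lt_or_eq_of_le hqk with hlt | heq
  · rw [← hco, Polynomial.coeff_eq_zero_of_natDegree_lt hlt]
  · have hlc : q.coeff k = q.leadingCoeff := by rw [Polynomial.leadingCoeff, heq]
    rw [← hco, hlc]
    exact nonnegPoly_leadingCoeff hqe

/-- A nonzero nonnegative-valued bivariate polynomial has even degree in the outer
variable. -/
lemma NN2.even_natDegree {S : R2} (h : NN2 S) (hS : S ≠ 0) : Even S.natDegree := by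
  have hl : S.leadingCoeff ≠ 0 := Polynomial.leadingCoeff_ne_zero.mpr hS
  have : ∃ t : ℝ, (S.leadingCoeff).eval t ≠ 0 := by
    by_contra hc
    push_neg at hc
    exact hl (Polynomial.funext (fun r => by simpa using hc r))
  obtain ⟨t, ht⟩ := this
  set q := S.map (Polynomial.evalRingHom t) with hq
  have hco : q.coeff S.natDegree = (S.leadingCoeff).eval t := by
    rw [hq, Polynomial.coeff_map]; rfl
  have hnd : q.natDegree = S.natDegree :=
    le_antisymm Polynomial.natDegree_map_le
      (Polynomial.le_natDegree_of_ne_zero (hco ▸ ht))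
  have hqe : ∀ u : ℝ, 0 ≤ q.eval u := by
    intro u; rw [hq, ← ev2_map]; exact h t u
  have hq0 : q ≠ 0 := fun h0 => ht (by rw [← hco, h0, Polynomial.coeff_zero])
  exact hnd ▸ nonnegPoly_even_natDegree hqe hq0

/-- The inner polynomial `y = 1 - a²`. -/
def YY : Polynomial ℝ := 1 - Polynomial.X ^ 2

/-- Kill at odd levels: `YY * A = B` with `A, B` nonnegative-valued implies both zero. -/
lemma killNeg {A B : Polynomial ℝ} (hA : ∀ t : ℝ, 0 ≤ A.eval t) (hB : ∀ t : ℝ, 0 ≤ B.eval t)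
    (h : YY * A = B) : A = 0 ∧ B = 0 := by
  have hz : ∀ t ∈ Set.Ioo (1:ℝ) 2, A.eval t = 0 := by
    intro t ht
    have he := congrArg (Polynomial.eval t) h
    simp only [Polynomial.eval_mul, YY, Polynomial.eval_sub, Polynomial.eval_one,
      Polynomial.eval_pow, Polynomial.eval_X] at he
    have h1 : (1:ℝ) - t^2 < 0 := by nlinarith [ht.1]
    nlinarith [hA t, hB t]
  have hA0 : A = 0 := poly_zero_of_zero_on_Ioo one_lt_two hz
  exact ⟨hA0, by rw [← h, hA0, mul_zero]⟩

/-- Kill at even levels: `A + YY * B = 0` with `A, B` nonnegative-valued implies both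
zero. -/
lemma killPos {A B : Polynomial ℝ} (hA : ∀ t : ℝ, 0 ≤ A.eval t) (hB : ∀ t : ℝ, 0 ≤ B.eval t)
    (h : A + YY * B = 0) : A = 0 ∧ B = 0 := by
  have hz : ∀ t ∈ Set.Ioo (0:ℝ) 1, A.eval t = 0 ∧ B.eval t = 0 := by
    intro t ht
    have he := congrArg (Polynomial.eval t) h
    simp only [Polynomial.eval_add, Polynomial.eval_mul, YY, Polynomial.eval_sub,
      Polynomial.eval_one, Polynomial.eval_pow, Polynomial.eval_X, Polynomial.eval_zero] at he
    have h1 : (0:ℝ) < 1 - t^2 := by nlinarith [ht.1, ht.2]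
    constructor <;> nlinarith [hA t, hB t, mul_nonneg h1.le (hB t)]
  exact ⟨poly_zero_of_zero_on_Ioo one_pos (fun t ht => (hz t ht).1),
    poly_zero_of_zero_on_Ioo one_pos (fun t ht => (hz t ht).2)⟩

/-- The coefficient equation at level `k + 1`. -/
lemma coeffEq {γ : ℝ} {S0 S1 S2 S3 : R2}
    (H : (1 + Polynomial.C YY * Polynomial.X) * S3
       = Polynomial.C (Polynomial.C γ) + S0 + Polynomial.C YY * S1 + Polynomial.X * S2)
    (k : ℕ) :
    S3.coeff (k+1) + YY * S3.coeff k
      = S0.coeff (k+1) + YY * S1.coeff (k+1) + S2.coeff k := by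
  have H' : S3 + Polynomial.C YY * (Polynomial.X * S3)
      = Polynomial.C (Polynomial.C γ) + S0 + Polynomial.C YY * S1 + Polynomial.X * S2 := by
    linear_combination H
  have hc := congrArg (fun p : R2 => p.coeff (k+1)) H'
  simpa [Polynomial.coeff_add, Polynomial.coeff_C_mul, Polynomial.coeff_X_mul,
    Polynomial.coeff_C] using hc

/-- Degree degradation: nonnegative-valued, degree at most `2m+2`, top coefficient zero,
implies degree at most `2m`. -/
lemma degStep {S : R2} (h : NN2 S) {m : ℕ} (hd : S.degree ≤ (2*m+2 : ℕ))
    (hc : S.coeff (2*m+2) = 0) : S.degree ≤ (2*m : ℕ) := by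
  rcases eq_or_ne S 0 with rfl | hS
  · simp
  have hnd : S.natDegree ≤ 2*m+2 := Polynomial.natDegree_le_iff_degree_le.mpr hd
  have hne : S.natDegree ≠ 2*m+2 := by
    intro he
    have := Polynomial.leadingCoeff_ne_zero.mpr hS
    rw [Polynomial.leadingCoeff, he, hc] at this
    exact this rfl
  obtain ⟨r, hr⟩ := h.even_natDegree hS
  have : S.natDegree ≤ 2*m := by omega
  exact Polynomial.natDegree_le_iff_degree_le.mp this

/-- The core impossibility, by induction on a degree bound. -/
lemma coreAux (γ : ℝ) (hγ : 0 < γ) :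
    ∀ m : ℕ, ∀ S0 S1 S2 S3 : R2, NN2 S0 → NN2 S1 → NN2 S2 → NN2 S3 →
    S0.degree ≤ (2*m : ℕ) → S1.degree ≤ (2*m : ℕ) → S2.degree ≤ (2*m : ℕ) →
    S3.degree ≤ (2*m : ℕ) →
    ((1 + Polynomial.C YY * Polynomial.X) * S3
       = Polynomial.C (Polynomial.C γ) + S0 + Polynomial.C YY * S1 + Polynomial.X * S2) →
    False := by
  intro m
  induction m with
  | zero =>
    intro S0 S1 S2 S3 n0 n1 n2 n3 d0 d1 d2 d3 H
    simp only [Nat.mul_zero, Nat.cast_zero] at d0 d1 d2 d3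
    have h1 := coeffEq H 0
    have z3 : S3.coeff 1 = 0 :=
      Polynomial.coeff_eq_zero_of_degree_lt (lt_of_le_of_lt d3 (by norm_num))
    have z0 : S0.coeff 1 = 0 :=
      Polynomial.coeff_eq_zero_of_degree_lt (lt_of_le_of_lt d0 (by norm_num))
    have z1 : S1.coeff 1 = 0 :=
      Polynomial.coeff_eq_zero_of_degree_lt (lt_of_le_of_lt d1 (by norm_num))
    rw [z3, z0, z1] at h1
    simp only [zero_add, add_zero, mul_zero] at h1
    have hk := killNeg (n3.coeff_nonneg (by simpa using d3)) (n2.coeff_nonneg (by simpa using d2)) h1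
    have hS3 : S3 = 0 := by
      rw [Polynomial.eq_C_of_degree_le_zero d3, hk.1, Polynomial.C_0]
    have hS2 : S2 = 0 := by
      rw [Polynomial.eq_C_of_degree_le_zero d2, hk.2, Polynomial.C_0]
    rw [hS3, hS2] at H
    have he := congrArg (ev2 0 0) H
    simp only [map_add, map_mul, map_zero, mul_zero, add_zero] at he
    have hγ' : ev2 0 0 (Polynomial.C (Polynomial.C γ)) = γ := by
      simp [ev2]
    have hY : ev2 0 0 (Polynomial.C YY) = 1 := by
      simp [ev2, YY]
    rw [hγ', hY, one_mul] at he
    have := n0 0 0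
    have := n1 0 0
    linarith [he.symm]
  | succ m ih =>
    intro S0 S1 S2 S3 n0 n1 n2 n3 d0 d1 d2 d3 H
    have e23 : (2*(m+1) : ℕ) = 2*m+2 := by ring
    rw [e23] at d0 d1 d2 d3
    have h1 := coeffEq H (2*m+2)
    have z3 : S3.coeff (2*m+2+1) = 0 :=
      Polynomial.coeff_eq_zero_of_degree_lt
        (lt_of_le_of_lt d3 (by exact_mod_cast Nat.lt_succ_self _))
    have z0 : S0.coeff (2*m+2+1) = 0 :=
      Polynomial.coeff_eq_zero_of_degree_lt
        (lt_of_le_of_lt d0 (by exact_mod_cast Nat.lt_succ_self _))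
    have z1 : S1.coeff (2*m+2+1) = 0 :=
      Polynomial.coeff_eq_zero_of_degree_lt
        (lt_of_le_of_lt d1 (by exact_mod_cast Nat.lt_succ_self _))
    rw [z3, z0, z1] at h1
    simp only [zero_add, add_zero, mul_zero] at h1
    have hk := killNeg (n3.coeff_nonneg d3) (n2.coeff_nonneg d2) h1
    have d3' : S3.degree ≤ (2*m : ℕ) := degStep n3 d3 hk.1
    have d2' : S2.degree ≤ (2*m : ℕ) := degStep n2 d2 hk.2
    have h2 := coeffEq H (2*m+1)
    have w3a : S3.coeff (2*m+1+1) = 0 :=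
      Polynomial.coeff_eq_zero_of_degree_lt (lt_of_le_of_lt d3' (by exact_mod_cast by omega))
    have w3b : S3.coeff (2*m+1) = 0 :=
      Polynomial.coeff_eq_zero_of_degree_lt (lt_of_le_of_lt d3' (by exact_mod_cast by omega))
    have w2 : S2.coeff (2*m+1) = 0 :=
      Polynomial.coeff_eq_zero_of_degree_lt (lt_of_le_of_lt d2' (by exact_mod_cast by omega))
    rw [w3a, w3b, w2] at h2
    simp only [zero_add, add_zero, mul_zero] at h2
    have hk2 := killPos (n0.coeff_nonneg (k := 2*m+1+1) (by exact_mod_cast d0))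
      (n1.coeff_nonneg (k := 2*m+1+1) (by exact_mod_cast d1)) h2.symm
    have d0' : S0.degree ≤ (2*m : ℕ) := degStep n0 d0 hk2.1
    have d1' : S1.degree ≤ (2*m : ℕ) := degStep n1 d1 hk2.2
    exact ih S0 S1 S2 S3 n0 n1 n2 n3 d0' d1' d2' d3' H

/-- The core impossibility: `(1 + yb) s₃ = γ + s₀ + y s₁ + b s₂` with `γ > 0` and the
`sᵢ` nonnegative-valued is impossible. -/
lemma core {γ : ℝ} (hγ : 0 < γ) {S0 S1 S2 S3 : R2}
    (n0 : NN2 S0) (n1 : NN2 S1) (n2 : NN2 S2) (n3 : NN2 S3)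
    (H : (1 + Polynomial.C YY * Polynomial.X) * S3
       = Polynomial.C (Polynomial.C γ) + S0 + Polynomial.C YY * S1 + Polynomial.X * S2) :
    False := by
  set m := max (max S0.natDegree S1.natDegree) (max S2.natDegree S3.natDegree) with hm
  have hd : ∀ S : R2, S.natDegree ≤ m → S.degree ≤ (2*m : ℕ) := by
    intro S hS
    refine le_trans Polynomial.degree_le_natDegree ?_
    exact_mod_cast le_trans hS (by omega)
  exact coreAux γ hγ m S0 S1 S2 S3 n0 n1 n2 n3
    (hd _ (le_max_of_le_left (le_max_left _ _)))
    (hd _ (le_max_of_le_left (le_max_right _ _)))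
    (hd _ (le_max_of_le_right (le_max_left _ _)))
    (hd _ (le_max_of_le_right (le_max_right _ _)))
    H

/-! ### The substitution `x₁ ↦ a, x₂ ↦ b, x₃ ↦ a²b, ν ↦ 0` -/

/-- The substitution map on variables. -/
def gsub : EVar → R2 :=
  Sum.elim ![Polynomial.C Polynomial.X, Polynomial.X,
             Polynomial.C (Polynomial.X ^ 2) * Polynomial.X] (fun _ => 0)

/-- The substitution ring homomorphism. -/
def Φ : EPoly →+* R2 := (MvPolynomial.aeval gsub).toRingHom

lemma Φ_liftX (p : MvPolynomial (Fin 3) ℝ) :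
    Φ (eliftX p) = MvPolynomial.aeval (gsub ∘ Sum.inl) p := by
  simp [Φ, eliftX, MvPolynomial.aeval_rename]

lemma gx0 : gsub (Sum.inl 0) = Polynomial.C Polynomial.X := rfl
lemma gx1 : gsub (Sum.inl 1) = Polynomial.X := rfl
lemma gx2 : gsub (Sum.inl 2) = Polynomial.C (Polynomial.X ^ 2) * Polynomial.X := rfl

lemma aeval_u :
    MvPolynomial.aeval (gsub ∘ Sum.inl) (X 2 - X 0 ^ 2 * X 1 : MvPolynomial (Fin 3) ℝ)
      = 0 := by
  simp only [map_sub, map_mul, map_pow, MvPolynomial.aeval_X, Function.comp_apply,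
    gx0, gx1, gx2]
  rw [← Polynomial.C_pow]
  ring

lemma Φ_ef : Φ (eliftX ef) = 0 := by
  rw [Φ_liftX, ef, map_pow, aeval_u]
  exact zero_pow (by norm_num)

lemma Φ_enu (j : Fin 3) : Φ (enu j) = 0 := by
  simp [Φ, enu, gsub]

lemma Φ_eF (k : Fin 3) : Φ (eF k) = 0 := by
  rw [eF, map_sub, map_sum]
  have h2 : ∀ j : Fin 3, Φ (enu j * eliftX (pderiv k (eh j))) = 0 := by
    intro j; rw [map_mul, Φ_enu, zero_mul]
  rw [Finset.sum_congr rfl (fun j _ => h2 j), Finset.sum_const_zero, sub_zero]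
  rw [Φ_liftX]
  have hef : ef = (X 2 - X 0 ^ 2 * X 1) * (X 2 - X 0 ^ 2 * X 1 : MvPolynomial (Fin 3) ℝ) := by
    rw [ef]; ring
  rw [hef, MvPolynomial.pderiv_mul, map_add, map_mul, map_mul, aeval_u]
  ring

lemma Φ_eI {q : EPoly} (hq : q ∈ eI) : Φ q = 0 := by
  have hle : eI ≤ RingHom.ker Φ := by
    rw [eI, Ideal.span_le]
    rintro x (⟨k, rfl⟩ | ⟨j, rfl⟩)
    · exact Φ_eF k
    · simp only [SetLike.mem_coe, RingHom.mem_ker, map_mul, Φ_enu, zero_mul]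
  exact hle hq

lemma Φ_eh0 : Φ (eliftX (eh 0)) = Polynomial.C YY := by
  rw [Φ_liftX]
  show MvPolynomial.aeval (gsub ∘ Sum.inl) (1 - X 0 ^ 2) = _
  simp only [map_sub, map_one, map_pow, MvPolynomial.aeval_X, Function.comp_apply, gx0, YY]

lemma Φ_eh1 : Φ (eliftX (eh 1)) = Polynomial.X := by
  rw [Φ_liftX]
  show MvPolynomial.aeval (gsub ∘ Sum.inl) (X 1) = _
  simp only [MvPolynomial.aeval_X, Function.comp_apply, gx1]

lemma Φ_eh2 : Φ (eliftX (eh 2)) = -(1 + Polynomial.C YY * Polynomial.X) := by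
  rw [Φ_liftX]
  show MvPolynomial.aeval (gsub ∘ Sum.inl) (X 2 - X 1 - 1) = _
  simp only [map_sub, map_one, MvPolynomial.aeval_X, Function.comp_apply, gx1, gx2, YY]
  ring

lemma ΦSOS_nonneg {p : EPoly} (hp : IsSOS p) : NN2 (Φ p) := by
  obtain ⟨m, q, rfl⟩ := hp
  intro t u
  rw [map_sum, map_sum]
  apply Finset.sum_nonneg
  intro i _
  rw [map_pow, map_pow]
  exact sq_nonneg _

lemma Φ_Cγ (γ : ℝ) : Φ (C γ) = Polynomial.C (Polynomial.C γ) := by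
  simp [Φ, MvPolynomial.aeval_C]

/-- Membership in the KKT linear cone forces `γ ≤ 0`. -/
theorem gamma_le_zero {γ : ℝ} (h : eliftX ef - C γ ∈ eM) : γ ≤ 0 := by
  by_contra hpos
  push_neg at hpos
  obtain ⟨σ0, σ, hσ0, hσ, q, hq, heq⟩ := h
  have hmap := congrArg Φ heq
  rw [map_sub, Φ_ef, Φ_Cγ, map_add, map_add, Φ_eI hq, add_zero, map_sum] at hmap
  have hsum : ∑ j : Fin 3, Φ (σ j * eliftX (eh j))
      = Φ (σ 0) * Polynomial.C YY + Φ (σ 1) * Polynomial.X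
        + Φ (σ 2) * -(1 + Polynomial.C YY * Polynomial.X) := by
    rw [Fin.sum_univ_three, map_mul, map_mul, map_mul, Φ_eh0, Φ_eh1, Φ_eh2]
  rw [hsum] at hmap
  apply core hpos (ΦSOS_nonneg hσ0) (ΦSOS_nonneg (hσ 0)) (ΦSOS_nonneg (hσ 1))
    (ΦSOS_nonneg (hσ 2))
  linear_combination hmap

/-! ### The easy parts -/

lemma part1 : IsLeast {y : ℝ | ∃ x : Fin 3 → ℝ, (∀ j, 0 ≤ eval x (eh j)) ∧ y = eval x ef} 1 := by
  constructor
  · refine ⟨![1, 0, 1], ?_, ?_⟩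
    · intro j
      fin_cases j <;> simp [eh]
    · simp [ef]
  · rintro y ⟨x, hh, rfl⟩
    have h0 := hh 0
    have h1 := hh 1
    have h2 := hh 2
    simp only [eh, Matrix.cons_val_zero, Matrix.cons_val_one, Matrix.head_cons,
      Matrix.cons_val_two, Matrix.tail_cons, map_sub, map_mul, map_pow, map_one,
      eval_X] at h0 h1 h2
    simp only [ef, map_sub, map_mul, map_pow, eval_X]
    have hu : 1 ≤ x 2 - x 0 ^ 2 * x 1 := by nlinarith
    nlinarith

lemma isSOS_zero {σ : Type*} : IsSOS (0 : MvPolynomial σ ℝ) :=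
  ⟨0, fun _ => 0, by simp⟩

lemma isSOS_ef_lift : IsSOS (eliftX ef) := by
  refine ⟨1, fun _ => eliftX (X 2 - X 0 ^ 2 * X 1), ?_⟩
  rw [Fin.sum_univ_one, eliftX, eliftX, ef, map_pow]

lemma zero_mem_eM : eliftX ef - C (0:ℝ) ∈ eM := by
  refine ⟨eliftX ef, fun _ => 0, isSOS_ef_lift, fun _ => isSOS_zero, 0, Ideal.zero_mem _, ?_⟩
  simp

lemma deg_ef : (eliftX ef).totalDegree ≤ 6 := by
  refine le_trans (totalDegree_rename_le _ _) ?_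
  rw [ef]
  refine le_trans (totalDegree_pow _ _) ?_
  have hu : (X 2 - X 0 ^ 2 * X 1 : MvPolynomial (Fin 3) ℝ).totalDegree ≤ 3 := by
    refine le_trans (totalDegree_sub _ _) ?_
    refine max_le (by simp [totalDegree_X]) ?_
    refine le_trans (totalDegree_mul _ _) ?_
    refine le_trans (add_le_add (totalDegree_pow _ _) le_rfl) ?_
    simp [totalDegree_X]
  omega

lemma zero_mem_eMTrunc {N : ℕ} (hN : 6 ≤ N) : eliftX ef - C (0:ℝ) ∈ eMTrunc N := by
  refine ⟨eliftX ef, fun _ => 0, isSOS_ef_lift, fun _ => isSOS_zero,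
    le_trans deg_ef hN, ?_, 0, ⟨0, 0, ?_, ?_, by simp⟩, by simp⟩
  · intro j; simp
  · intro k; simp
  · intro j; simp

lemma eMTrunc_subset (N : ℕ) : eMTrunc N ⊆ eM := by
  rintro p ⟨σ0, σ, hσ0, hσ, _, _, q, ⟨φ, χ, _, _, rfl⟩, rfl⟩
  refine ⟨σ0, σ, hσ0, hσ, _, ?_, rfl⟩
  apply Ideal.add_mem
  · apply Ideal.sum_mem
    intro k _
    exact Ideal.mul_mem_left _ _ (Ideal.subset_span (Or.inl ⟨k, rfl⟩))
  · apply Ideal.sum_mem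
    intro j _
    exact Ideal.mul_mem_left _ _ (Ideal.subset_span (Or.inr ⟨j, rfl⟩))

lemma part2 : sSup {γ : ℝ | eliftX ef - C γ ∈ eM} = 0 := by
  apply IsGreatest.csSup_eq
  exact ⟨zero_mem_eM, fun γ hγ => gamma_le_zero hγ⟩

lemma part3 : Tendsto (fun N : ℕ => sSup {γ : ℝ | eliftX ef - C γ ∈ eMTrunc N})
    atTop (nhds 0) := by
  apply tendsto_atTop_of_eventually_const (i₀ := 6)
  intro N hN
  apply IsGreatest.csSup_eq
  exact ⟨zero_mem_eMTrunc hN, fun γ hγ => gamma_le_zero (eMTrunc_subset N hγ)⟩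

/-- For `f = (x_3 − x_1² x_2)²` over
`{x : 1 − x_1² ≥ 0, x_2 ≥ 0, x_3 − x_2 − 1 ≥ 0}`: (i) the global minimum of `f` is `1`;
but (ii) `sup{γ : f − γ ∈ M_KKT} = 0`; in particular the linear-cone SOS relaxation
bounds `f*_N = sup{γ : f − γ ∈ M_{N,KKT}}` converge to `0 < 1 = f*`, so they fail to
reach the global minimum. -/
theorem stmt13 :
    IsLeast {y : ℝ | ∃ x : Fin 3 → ℝ, (∀ j, 0 ≤ eval x (eh j)) ∧ y = eval x ef} 1 ∧
    sSup {γ : ℝ | eliftX ef - C γ ∈ eM} = 0 ∧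
    Tendsto (fun N : ℕ => sSup {γ : ℝ | eliftX ef - C γ ∈ eMTrunc N})
      atTop (nhds 0) ∧
    (0 : ℝ) < 1 := by
  exact ⟨part1, part2, part3, by norm_num⟩

end
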